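/- arXiv:1804.09498 — 2 statements merged into one kernel-verified Lean document; each statement's English description precedes it below -/
import Mathlib

section
/- Under the hypotheses that Ψ(ω) = 0 and (𝒢ω + β)₁ = 0, if the x-gyro has a pure scale-factor fault ω̃_x = s·ω_x (with other components exact), then Ψ(ω̃) = A ω_x² (s − 1)², where A = 𝒢₁₁ ≤ 0. In particular Ψ(ω̃) ≤ 0, and Ψ(ω̃) = 0 iff s = 1, ω_x = 0, or A = 0. -/
open Matrix

/-- Scale-factor fault: if `Ψ(ω) = 0`, `(𝒢ω + β)₁ = 0` and `ω̃ = (s·ω_x, ω_y, ω_z)`, then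
`Ψ(ω̃) = A ω_x² (s − 1)²` with `A = 𝒢₁₁ ≤ 0`; in particular `Ψ(ω̃) ≤ 0`, with equality iff
`s = 1`, `ω_x = 0`, or `A = 0`. -/
theorem stmt8 (r β ω : Fin 3 → ℝ) (K s : ℝ)
    (G : Matrix (Fin 3) (Fin 3) ℝ)
    (hG : G = vecMulVec r r - (r ⬝ᵥ r) • (1 : Matrix (Fin 3) (Fin 3) ℝ))
    (Ψ : (Fin 3 → ℝ) → ℝ)
    (hΨ : Ψ = fun w => w ⬝ᵥ (G *ᵥ w) + 2 * (β ⬝ᵥ w) + K)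
    (hzero : Ψ ω = 0)
    (hstat : (G *ᵥ ω + β) 0 = 0)
    (ω' : Fin 3 → ℝ) (hω' : ω' = Function.update ω 0 (s * ω 0)) :
    Ψ ω' = G 0 0 * (ω 0) ^ 2 * (s - 1) ^ 2 ∧
    G 0 0 ≤ 0 ∧
    Ψ ω' ≤ 0 ∧
    (Ψ ω' = 0 ↔ s = 1 ∨ ω 0 = 0 ∨ G 0 0 = 0) := by
  subst hG hΨ hω'
  simp only [Pi.add_apply, dotProduct, mulVec, vecMulVec_apply, Matrix.sub_apply,
    Matrix.smul_apply, Matrix.one_apply, Fin.sum_univ_three, Function.update] at *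
  norm_num [Fin.ext_iff] at *
  set A := r 0 * r 0 - (r 0 * r 0 + r 1 * r 1 + r 2 * r 2) with hA
  have hG00 : A ≤ 0 := by nlinarith [sq_nonneg (r 1), sq_nonneg (r 2)]
  have key : s * ω 0 * (A * (s * ω 0) + r 0 * r 1 * ω 1 + r 0 * r 2 * ω 2) +
        ω 1 * (r 1 * r 0 * (s * ω 0) + (r 1 * r 1 - (r 0 * r 0 + r 1 * r 1 + r 2 * r 2)) * ω 1 + r 1 * r 2 * ω 2) +
        ω 2 * (r 2 * r 0 * (s * ω 0) + r 2 * r 1 * ω 1 + (-(r 1 * r 1) + -(r 0 * r 0)) * ω 2) +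
        2 * (β 0 * (s * ω 0) + β 1 * ω 1 + β 2 * ω 2) + K = A * ω 0 ^ 2 * (s - 1) ^ 2 := by
    linear_combination hzero + (2 * (s - 1) * ω 0) * hstat
  rw [key]
  refine ⟨rfl, by linarith, ?_, ?_⟩
  · have h1 := mul_nonneg (sq_nonneg (ω 0)) (sq_nonneg (s - 1))
    nlinarith
  · simp only [mul_assoc, mul_eq_zero, pow_eq_zero_iff (two_ne_zero), hA, sub_eq_zero]
    tauto
end

section
/- If the secondary satellite lies on the x-axis of the primary body frame, i.e., r = (r_x, 0, 0), then A = r_x² − ‖r‖² = 0, and consequently for any fault in the x-gyro alone (ω̃ differing from ω only in the x component) the residual Ψ(ω̃) = A(ω̃_x − ω_x)² vanishes, so the x-gyro fault is undetectable by the residual. -/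
/-!
Along the x-axis, `Ψ(ω + t e₀) = Ψ(ω) + 2t (𝒢ω + β)₀ + t² 𝒢₀₀` because `𝒢` is symmetric. The first
two terms vanish for the true rate, and `𝒢₀₀ = r₀² − ‖r‖²` vanishes when `r` lies on the x-axis.
-/

open Matrix

theorem Matrix.IsSymm.quadratic_add_single {n R : Type*} [Fintype n] [DecidableEq n] [CommRing R]
    {G : Matrix n n R} (hG : G.IsSymm) (β w : n → R) (K : R) (i : n) (t : R) :
    (w + Pi.single i t) ⬝ᵥ G *ᵥ (w + Pi.single i t) + 2 * (β ⬝ᵥ (w + Pi.single i t)) + K =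
      w ⬝ᵥ G *ᵥ w + 2 * (β ⬝ᵥ w) + K + 2 * t * (G *ᵥ w + β) i + t ^ 2 * G i i := by
  have hcross : w ⬝ᵥ G *ᵥ Pi.single i t = t * (G *ᵥ w) i := calc
    w ⬝ᵥ G *ᵥ Pi.single i t = w ⬝ᵥ Gᵀ *ᵥ Pi.single i t := by rw [hG.eq]
    _ = Pi.single i t ⬝ᵥ G *ᵥ w := dotProduct_transpose_mulVec G w _
    _ = t * (G *ᵥ w) i := single_dotProduct ..
  have hdiag : Pi.single i t ⬝ᵥ G *ᵥ Pi.single i t = t ^ 2 * G i i := by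
    rw [single_dotProduct, mulVec_single]
    simp only [Pi.smul_apply, col_apply, MulOpposite.smul_eq_mul_unop, MulOpposite.unop_op]
    ring
  rw [mulVec_add, dotProduct_add, add_dotProduct, add_dotProduct, hcross, hdiag,
    single_dotProduct, dotProduct_add, dotProduct_single, Pi.add_apply]
  ring

theorem Matrix.isSymm_vecMulVec_sub_smul_one {n R : Type*} [DecidableEq n] [CommRing R]
    (r : n → R) (c : R) : (vecMulVec r r - c • (1 : Matrix n n R)).IsSymm :=
  IsSymm.sub (transpose_vecMulVec r r) (isSymm_one.smul c)

theorem Matrix.vecMulVec_sub_dotProduct_smul_one_apply_self {n R : Type*} [Fintype n]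
    [DecidableEq n] [CommRing R] {r : n → R} {i : n} (hr : ∀ j ≠ i, r j = 0) :
    (vecMulVec r r - (r ⬝ᵥ r) • (1 : Matrix n n R)) i i = 0 := by
  have hnorm : r ⬝ᵥ r = r i * r i :=
    Finset.sum_eq_single i (fun j _ hj => by simp [hr j hj]) (by simp)
  simp [vecMulVec_apply, hnorm]

theorem eq_add_single_sub_of_forall_ne {ι R : Type*} [DecidableEq ι] [AddCommGroup R]
    {v w : ι → R} {i : ι} (h : ∀ j ≠ i, v j = w j) : v = w + Pi.single i (v i - w i) := by
  ext j
  rcases eq_or_ne j i with rfl | hj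
  · simp
  · simp [h j hj, hj]

/-- If the secondary satellite lies on the x body axis, i.e. `r = (r_x, 0, 0)`, then
`A = r_x² − ‖r‖² = 0`, and for any fault in the x-gyro alone (ω̃ differing from ω only in the
first component, with `Ψ(ω) = 0` and the x-stationarity condition) the residual `Ψ(ω̃)` vanishes:
the x-gyro fault is undetectable. -/
theorem stmt16 (r β ω ω' : Fin 3 → ℝ) (K : ℝ)
    (hr1 : r 1 = 0) (hr2 : r 2 = 0)
    (G : Matrix (Fin 3) (Fin 3) ℝ)
    (hG : G = vecMulVec r r - (r ⬝ᵥ r) • (1 : Matrix (Fin 3) (Fin 3) ℝ))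
    (Ψ : (Fin 3 → ℝ) → ℝ)
    (hΨ : Ψ = fun w => w ⬝ᵥ (G *ᵥ w) + 2 * (β ⬝ᵥ w) + K)
    (hzero : Ψ ω = 0)
    (hstat : (G *ᵥ ω + β) 0 = 0)
    (h1 : ω' 1 = ω 1) (h2 : ω' 2 = ω 2) :
    G 0 0 = 0 ∧ Ψ ω' = 0 := by
  have hA : G 0 0 = 0 := by
    subst hG
    refine vecMulVec_sub_dotProduct_smul_one_apply_self fun j hj => ?_
    fin_cases j <;> simp_all
  have hω' : ω' = ω + Pi.single 0 (ω' 0 - ω 0) :=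
    eq_add_single_sub_of_forall_ne fun j hj => by fin_cases j <;> simp_all
  have hGsymm : G.IsSymm := hG ▸ isSymm_vecMulVec_sub_smul_one r _
  refine ⟨hA, ?_⟩
  simp only [hΨ] at hzero ⊢
  rw [hω', hGsymm.quadratic_add_single, hzero, hstat, hA]
  ring
end
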